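/- (Leftover hash lemma, classical version) Let H = {h_s : 𝔽₂^k → 𝔽₂^j} be a universal₂ family, S uniform on seeds and independent of a random variable Z on 𝔽₂^k with H_min(Z) ≥ m. Then the statistical distance between (S, h_S(Z)) and (S, U_j) is at most (1/2)·√(2^{j-m}), where U_j is uniform on 𝔽₂^j and independent of S. Consequently, if j ≤ m - 2·log₂(1/ε), the distance is at most ε/2. -/
import Mathlib


open Classical in
/-- Leftover hash lemma (classical version).  `h : S → 𝔽₂^k → 𝔽₂^j` is a universal₂
family, the seed is uniform on `S`, and `Z` has distribution `pZ` with min-entropy at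
least `m` (all point masses at most `2^{-m}`).  Then the statistical distance between
`(S, h_S(Z))` and `(S, U_j)` is at most `(1/2)·√(2^{j-m})`; consequently, if
`j ≤ m - 2·log₂(1/ε)`, it is at most `ε/2`. -/
theorem leftover_hash_lemma
    {S : Type*} [Fintype S] [Nonempty S] (j k : ℕ)
    (h : S → (Fin k → ZMod 2) → (Fin j → ZMod 2))
    (huniv : ∀ x y : Fin k → ZMod 2, x ≠ y →
      ((Finset.univ.filter (fun s : S => h s x = h s y)).card : ℝ) /
        (Fintype.card S : ℝ) ≤ (2 : ℝ) ^ (-(j : ℤ)))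
    (pZ : (Fin k → ZMod 2) → ℝ) (hpZ0 : ∀ z, 0 ≤ pZ z) (hpZ1 : ∑ z, pZ z = 1)
    (m : ℝ) (hmin : ∀ z, pZ z ≤ (2 : ℝ) ^ (-m)) :
    ((1 / 2) * ∑ s : S, ∑ u : Fin j → ZMod 2,
        |(1 / (Fintype.card S : ℝ)) * (∑ z ∈ Finset.univ.filter (fun z => h s z = u), pZ z)
          - (1 / (Fintype.card S : ℝ)) * (2 : ℝ) ^ (-(j : ℤ))|
      ≤ (1 / 2) * Real.sqrt ((2 : ℝ) ^ ((j : ℝ) - m))) ∧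
    (∀ ε : ℝ, 0 < ε → (j : ℝ) ≤ m - 2 * Real.logb 2 (1 / ε) →
      (1 / 2) * ∑ s : S, ∑ u : Fin j → ZMod 2,
        |(1 / (Fintype.card S : ℝ)) * (∑ z ∈ Finset.univ.filter (fun z => h s z = u), pZ z)
          - (1 / (Fintype.card S : ℝ)) * (2 : ℝ) ^ (-(j : ℤ))|
      ≤ ε / 2) := by
  set N : ℝ := (Fintype.card S : ℝ) with hNdef
  have hN : (0:ℝ) < N := by
    rw [hNdef]; exact_mod_cast Fintype.card_pos (α := S)
  set q : ℝ := (2 : ℝ) ^ (-(j : ℤ)) with hqdef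
  have hq0 : 0 < q := by positivity
  set p : S → (Fin j → ZMod 2) → ℝ :=
    fun s u => ∑ z ∈ Finset.univ.filter (fun z => h s z = u), pZ z with hpdef
  have hcardU : (Fintype.card (Fin j → ZMod 2) : ℝ) = 2 ^ j := by
    simp [Fintype.card_fun, ZMod.card]
  have h2jq : (2 : ℝ) ^ j * q = 1 := by
    rw [hqdef, ← zpow_natCast (2:ℝ) j, ← zpow_add₀ (by norm_num : (2:ℝ) ≠ 0)]
    simp
  -- each p s · is a probability distribution
  have hpsum : ∀ s, ∑ u, p s u = 1 := by
    intro s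
    rw [hpdef]
    rw [Finset.sum_fiberwise Finset.univ (fun z => h s z) pZ]
    exact hpZ1
  have hp0 : ∀ s u, 0 ≤ p s u := fun s u => Finset.sum_nonneg fun z _ => hpZ0 z
  -- collision expansion
  have key : ∀ s : S, ∑ u, (p s u) ^ 2
      = ∑ x, ∑ y, if h s x = h s y then pZ x * pZ y else 0 := by
    intro s
    calc ∑ u, (p s u) ^ 2
        = ∑ u, ∑ x, ∑ y, (if h s x = u then pZ x else 0) * (if h s y = u then pZ y else 0) := by
          simp only [hpdef, Finset.sum_filter, pow_two, Finset.sum_mul_sum]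
      _ = ∑ x, ∑ y, ∑ u, (if h s x = u then pZ x else 0) * (if h s y = u then pZ y else 0) := by
          rw [Finset.sum_comm]
          exact Finset.sum_congr rfl fun x _ => Finset.sum_comm
      _ = ∑ x, ∑ y, if h s x = h s y then pZ x * pZ y else 0 := by
          refine Finset.sum_congr rfl fun x _ => Finset.sum_congr rfl fun y _ => ?_
          simp only [ite_mul, mul_ite, zero_mul, mul_zero]
          rw [Finset.sum_ite_eq]
          simp [eq_comm]
  have key2 : ∑ s : S, ∑ u, (p s u) ^ 2
      = ∑ x, ∑ y, ((Finset.univ.filter (fun s : S => h s x = h s y)).card : ℝ) * (pZ x * pZ y) := by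
    simp_rw [key]
    rw [Finset.sum_comm]
    refine Finset.sum_congr rfl fun x _ => ?_
    rw [Finset.sum_comm]
    refine Finset.sum_congr rfl fun y _ => ?_
    rw [← Finset.sum_filter, Finset.sum_const, nsmul_eq_mul]
  -- bound on the collision sum
  have hcoll : ∑ s : S, ∑ u, (p s u) ^ 2 ≤ N * (2:ℝ) ^ (-m) + N * q := by
    rw [key2]
    have hbound : ∀ x y : Fin k → ZMod 2,
        ((Finset.univ.filter (fun s : S => h s x = h s y)).card : ℝ) * (pZ x * pZ y)
        ≤ (if x = y then N * ((2:ℝ)^(-m) * pZ x) else 0) + N * q * (pZ x * pZ y) := by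
      intro x y
      by_cases hxy : x = y
      · subst hxy
        rw [if_pos rfl]
        have hc : ((Finset.univ.filter (fun s : S => h s x = h s x)).card : ℝ) ≤ N := by
          rw [hNdef]
          exact_mod_cast Finset.card_filter_le _ _
        have h1 : ((Finset.univ.filter (fun s : S => h s x = h s x)).card : ℝ) * (pZ x * pZ x)
            ≤ N * ((2:ℝ)^(-m) * pZ x) := by
          apply mul_le_mul hc (mul_le_mul_of_nonneg_right (hmin x) (hpZ0 x))
            (mul_nonneg (hpZ0 x) (hpZ0 x)) hN.le
        have h2 : (0:ℝ) ≤ N * q * (pZ x * pZ x) :=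
          mul_nonneg (mul_nonneg hN.le hq0.le) (mul_nonneg (hpZ0 x) (hpZ0 x))
        calc ((Finset.univ.filter (fun s : S => h s x = h s x)).card : ℝ) * (pZ x * pZ x)
            ≤ N * ((2:ℝ)^(-m) * pZ x) := h1
          _ ≤ N * ((2:ℝ)^(-m) * pZ x) + N * q * (pZ x * pZ x) := le_add_of_nonneg_right h2
      · rw [if_neg hxy, zero_add]
        have hc : ((Finset.univ.filter (fun s : S => h s x = h s y)).card : ℝ) ≤ N * q := by
          have := huniv x y hxy
          rw [div_le_iff₀ hN] at this
          linarith [this]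
        exact mul_le_mul_of_nonneg_right hc (mul_nonneg (hpZ0 x) (hpZ0 y))
    have hsum2 : ∑ x, ∑ y, pZ x * pZ y = 1 := by
      calc ∑ x, ∑ y, pZ x * pZ y
          = ∑ x, pZ x * ∑ y, pZ y := Finset.sum_congr rfl fun x _ => (Finset.mul_sum _ _ _).symm
        _ = 1 := by simp_rw [hpZ1, mul_one]; exact hpZ1
    have e2 : ∑ x, ∑ y, N * q * (pZ x * pZ y) = N * q := by
      calc ∑ x, ∑ y, N * q * (pZ x * pZ y)
          = N * q * ∑ x, ∑ y, pZ x * pZ y := by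
            rw [Finset.mul_sum]
            exact Finset.sum_congr rfl fun x _ => (Finset.mul_sum _ _ _).symm
        _ = N * q := by rw [hsum2, mul_one]
    have e1 : ∑ x, N * ((2:ℝ)^(-m) * pZ x) = N * (2:ℝ)^(-m) := by
      calc ∑ x, N * ((2:ℝ)^(-m) * pZ x)
          = N * (2:ℝ)^(-m) * ∑ x, pZ x := by
            rw [Finset.mul_sum]
            exact Finset.sum_congr rfl fun x _ => by ring
        _ = N * (2:ℝ)^(-m) := by rw [hpZ1, mul_one]
    calc ∑ x, ∑ y, ((Finset.univ.filter (fun s : S => h s x = h s y)).card : ℝ) * (pZ x * pZ y)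
        ≤ ∑ x, ∑ y, ((if x = y then N * ((2:ℝ)^(-m) * pZ x) else 0) + N * q * (pZ x * pZ y)) :=
          Finset.sum_le_sum fun x _ => Finset.sum_le_sum fun y _ => hbound x y
      _ = N * (2:ℝ)^(-m) + N * q := by
          simp only [Finset.sum_add_distrib, Finset.sum_ite_eq, Finset.mem_univ, if_pos]
          rw [e1, e2]
  -- sum of squared deviations
  have hDsq : ∑ s : S, ∑ u, (p s u - q) ^ 2 ≤ N * (2:ℝ) ^ (-m) := by
    have expand : ∀ s : S, ∑ u, (p s u - q) ^ 2 = (∑ u, (p s u)^2) - q := by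
      intro s
      have : ∀ u, (p s u - q)^2 = (p s u)^2 - 2 * q * p s u + q^2 := fun u => by ring
      simp_rw [this]
      rw [Finset.sum_add_distrib, Finset.sum_sub_distrib, ← Finset.mul_sum, hpsum,
        Finset.sum_const, Finset.card_univ, nsmul_eq_mul]
      have : (Fintype.card (Fin j → ZMod 2) : ℝ) * q ^ 2 = q := by
        rw [hcardU, sq, ← mul_assoc, h2jq, one_mul]
      rw [this]; ring
    simp_rw [expand]
    rw [Finset.sum_sub_distrib, Finset.sum_const, Finset.card_univ, nsmul_eq_mul, ← hNdef]
    linarith [hcoll]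
  -- Cauchy–Schwarz
  have hCS : ∑ s : S, ∑ u, |p s u - q| ≤ Real.sqrt (N * 2^j * (N * (2:ℝ)^(-m))) := by
    have habs : (∑ x ∈ (Finset.univ ×ˢ Finset.univ : Finset (S × (Fin j → ZMod 2))),
        1 * |p x.1 x.2 - q|) ^ 2
        ≤ (∑ x ∈ (Finset.univ ×ˢ Finset.univ : Finset (S × (Fin j → ZMod 2))), (1:ℝ)^2)
          * ∑ x ∈ (Finset.univ ×ˢ Finset.univ : Finset (S × (Fin j → ZMod 2))),
              |p x.1 x.2 - q| ^ 2 :=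
      Finset.sum_mul_sq_le_sq_mul_sq _ _ _
    rw [Finset.sum_product, Finset.sum_product, Finset.sum_product] at habs
    simp only [one_mul, one_pow, sq_abs] at habs
    have hcard : (∑ _s : S, ∑ _u : Fin j → ZMod 2, (1:ℝ)) = N * 2^j := by
      simp only [Finset.sum_const, Finset.card_univ, nsmul_eq_mul, mul_one]
      rw [hcardU, ← hNdef]
    rw [hcard] at habs
    have h1 : (∑ s : S, ∑ u, |p s u - q|) ^ 2 ≤ N * 2^j * (N * (2:ℝ)^(-m)) := by
      calc (∑ s : S, ∑ u, |p s u - q|) ^ 2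
          ≤ N * 2^j * ∑ s : S, ∑ u, (p s u - q)^2 := habs
        _ ≤ N * 2^j * (N * (2:ℝ)^(-m)) := by
            apply mul_le_mul_of_nonneg_left hDsq (by positivity)
    have h2 : 0 ≤ ∑ s : S, ∑ u, |p s u - q| :=
      Finset.sum_nonneg fun s _ => Finset.sum_nonneg fun u _ => abs_nonneg _
    nlinarith [Real.sq_sqrt (show (0:ℝ) ≤ N * 2^j * (N * (2:ℝ)^(-m)) by positivity),
      Real.sqrt_nonneg (N * 2^j * (N * (2:ℝ)^(-m)))]
  -- simplify the sqrt
  have hsqrt : Real.sqrt (N * 2^j * (N * (2:ℝ)^(-m))) = N * Real.sqrt ((2:ℝ) ^ ((j:ℝ) - m)) := by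
    have harr : N * 2^j * (N * (2:ℝ)^(-m)) = N^2 * ((2:ℝ) ^ ((j:ℝ) - m)) := by
      rw [Real.rpow_sub (by norm_num), Real.rpow_natCast,
        Real.rpow_neg (by norm_num : (0:ℝ) ≤ 2)]
      field_simp
    rw [harr, Real.sqrt_mul (by positivity), Real.sqrt_sq hN.le]
  -- main bound
  have main : (1 / 2) * ∑ s : S, ∑ u : Fin j → ZMod 2,
      |(1 / N) * (p s u) - (1 / N) * q| ≤ (1 / 2) * Real.sqrt ((2 : ℝ) ^ ((j : ℝ) - m)) := by
    have : ∀ s u, |(1 / N) * (p s u) - (1 / N) * q| = (1 / N) * |p s u - q| := by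
      intro s u
      rw [← mul_sub, abs_mul, abs_of_pos (by positivity : (0:ℝ) < 1 / N)]
    simp_rw [this, ← Finset.mul_sum]
    calc (1/2) * ((1/N) * ∑ s : S, ∑ u, |p s u - q|)
        ≤ (1/2) * ((1/N) * (N * Real.sqrt ((2:ℝ) ^ ((j:ℝ) - m)))) := by
          apply mul_le_mul_of_nonneg_left _ (by norm_num)
          apply mul_le_mul_of_nonneg_left _ (by positivity)
          rw [← hsqrt]; exact hCS
      _ = (1/2) * Real.sqrt ((2:ℝ) ^ ((j:ℝ) - m)) := by
          rw [one_div N, inv_mul_cancel_left₀ hN.ne']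
  constructor
  · exact main
  · intro ε hε hj
    refine main.trans ?_
    have hlogb : Real.logb 2 (1/ε) = - Real.logb 2 ε := by
      rw [one_div, Real.logb, Real.log_inv, Real.logb]; ring
    have hexp : (j:ℝ) - m ≤ 2 * Real.logb 2 ε := by
      rw [hlogb] at hj; linarith
    have h1 : (2:ℝ) ^ ((j:ℝ) - m) ≤ (2:ℝ) ^ (2 * Real.logb 2 ε) :=
      Real.rpow_le_rpow_of_exponent_le one_le_two hexp
    have h2 : (2:ℝ) ^ (2 * Real.logb 2 ε) = ε ^ 2 := by
      rw [mul_comm, Real.rpow_mul (by norm_num : (0:ℝ) ≤ 2),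
        Real.rpow_logb (by norm_num) (by norm_num) hε, Real.rpow_two]
    have : Real.sqrt ((2:ℝ) ^ ((j:ℝ) - m)) ≤ ε := by
      calc Real.sqrt ((2:ℝ) ^ ((j:ℝ) - m)) ≤ Real.sqrt (ε^2) := by
            apply Real.sqrt_le_sqrt; rw [← h2]; exact h1
        _ = ε := Real.sqrt_sq hε.le
    linarith
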